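/- arXiv:2009.04052 — 3 statements merged into one kernel-verified Lean document; each statement's English description precedes it below -/
import Mathlib

section
/- Let s, n, b, q be integers with s ≥ 2, n ≥ 2, b ≥ 2, q ≥ 4, n·s^n > b^{q-1}, and n·s^n < (n·s·b)^{7/6}. Then 11n - 21 < 10·log_s(n). -/
theorem stmt_9 (s n b q : ℕ) (hs : 2 ≤ s) (hn : 2 ≤ n) (hb : 2 ≤ b) (hq : 4 ≤ q)
    (h1 : n * s ^ n > b ^ (q - 1))
    (h2 : ((n * s ^ n : ℕ) : ℝ) < ((n * s * b : ℕ) : ℝ) ^ ((7 : ℝ) / 6)) :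
    11 * (n : ℝ) - 21 < 10 * (Real.log n / Real.log s) := by
  have hs1 : (1:ℝ) < s := by exact_mod_cast hs.trans_lt' one_lt_two
  have hn1 : (1:ℝ) < n := by exact_mod_cast hn.trans_lt' one_lt_two
  have hb1 : (1:ℝ) < b := by exact_mod_cast hb.trans_lt' one_lt_two
  have hLs : 0 < Real.log s := Real.log_pos hs1
  have hLn : 0 < Real.log n := Real.log_pos hn1
  have hLb : 0 < Real.log b := Real.log_pos hb1
  have hApos : (0:ℝ) < ((n * s ^ n : ℕ) : ℝ) := by positivity
  have hBpos : (0:ℝ) < ((n * s * b : ℕ) : ℝ) := by positivity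
  have hlogA : Real.log ((n * s ^ n : ℕ) : ℝ) = Real.log n + n * Real.log s := by
    push_cast
    rw [Real.log_mul (by positivity) (by positivity), Real.log_pow]
  have hlogB : Real.log ((n * s * b : ℕ) : ℝ) = Real.log n + Real.log s + Real.log b := by
    push_cast
    rw [Real.log_mul (by positivity) (by positivity), Real.log_mul (by positivity) (by positivity)]
  -- from h1
  have h1R : ((b:ℝ)) ^ (q - 1) < ((n * s ^ n : ℕ) : ℝ) := by exact_mod_cast h1
  have h1log : ((q - 1 : ℕ) : ℝ) * Real.log b < Real.log n + n * Real.log s := by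
    have := Real.log_lt_log (by positivity) h1R
    rwa [Real.log_pow, hlogA] at this
  have hq3 : (3:ℝ) ≤ ((q - 1 : ℕ) : ℝ) := by
    have : 3 ≤ q - 1 := by omega
    exact_mod_cast this
  have h1' : 3 * Real.log b < Real.log n + n * Real.log s := by
    have : 3 * Real.log b ≤ ((q - 1 : ℕ) : ℝ) * Real.log b := by
      apply mul_le_mul_of_nonneg_right hq3 hLb.le
    linarith
  -- from h2
  have h2' : Real.log n + n * Real.log s <
      7 / 6 * (Real.log n + Real.log s + Real.log b) := by
    have := Real.log_lt_log hApos h2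
    rwa [Real.log_rpow hBpos, hlogA, hlogB] at this
  have key : (11 * (n:ℝ) - 21) * Real.log s < 10 * Real.log n := by nlinarith
  have : 10 * (Real.log n / Real.log s) = (10 * Real.log n) / Real.log s := by ring
  rw [this, lt_div_iff₀ hLs]
  linarith
end

section
/- Assume the abc conjecture holds with ε = 1/6, i.e., there are only finitely many triples (a,b,c) of coprime positive integers with a + b = c and c ≥ rad(abc)^{7/6}. Then there are only finitely many quadruples (s, n, b, q) of integers with s, b ≥ 2, n ≥ 3, q ≥ 3 such that n·s^n + 1 = (b^q - 1)/(b - 1). -/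
/-!
Put `c + 1 = b ^ (q - 1)` and `M = n * s ^ n`. The equation becomes `M * (b - 1) = b * c`, so
`1 + c = c + 1` is an abc triple whose radical `rad (c * b ^ (q - 1)) = rad (M * (b - 1))` is at most
`n * s * (b - 1)`, while `c + 1 ≤ M ≤ 2 * c`. Every coordinate of the quadruple is at most `M`, so
a quadruple whose triple is one of the finitely many exceptions is bounded by twice its `c + 1`.
Otherwise `(c + 1) ^ 6 < (n * s * (b - 1)) ^ 7`, and since `b ^ 2 ≤ c + 1` this forces
`M ^ 5 < 4096 * (n * s) ^ 14`, i.e. `s ^ (5 * n - 14) < 4096 * n ^ 9`, which bounds `n` and then `s`.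
-/

def rad (m : ℕ) : ℕ := ∏ p ∈ m.primeFactors, p

lemma rad_le_self {m : ℕ} (hm : m ≠ 0) : rad m ≤ m :=
  Nat.le_of_dvd (Nat.pos_of_ne_zero hm) (Nat.prod_primeFactors_dvd m)

lemma rad_mul_le {x y : ℕ} (hx : x ≠ 0) (hy : y ≠ 0) : rad (x * y) ≤ rad x * rad y := by
  have hinter : 0 < ∏ p ∈ x.primeFactors ∩ y.primeFactors, p :=
    Finset.prod_pos fun p hp => (Nat.prime_of_mem_primeFactors (Finset.mem_inter.1 hp).1).pos
  unfold rad
  rw [Nat.primeFactors_mul hx hy, ← Finset.prod_union_inter]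
  exact Nat.le_mul_of_pos_right _ hinter

lemma rad_pow (x : ℕ) {k : ℕ} (hk : k ≠ 0) : rad (x ^ k) = rad x := by
  unfold rad
  rw [Nat.primeFactors_pow x hk]

lemma rad_mul_pow {x y : ℕ} (hx : x ≠ 0) (hy : y ≠ 0) {k : ℕ} (hk : k ≠ 0) :
    rad (x * y ^ k) = rad (x * y) := by
  unfold rad
  rw [Nat.primeFactors_mul hx (pow_ne_zero k hy), Nat.primeFactors_pow y hk,
    Nat.primeFactors_mul hx hy]

lemma rad_mul_pow_mul_le {n s t : ℕ} (hn : n ≠ 0) (hs : s ≠ 0) (ht : t ≠ 0) :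
    rad (n * s ^ n * t) ≤ n * s * t :=
  calc rad (n * s ^ n * t) ≤ rad n * rad (s ^ n) * rad t :=
        (rad_mul_le (by positivity) ht).trans
          (Nat.mul_le_mul_right _ (rad_mul_le hn (by positivity)))
    _ = rad n * rad s * rad t := by rw [rad_pow s hn]
    _ ≤ n * s * t := by gcongr <;> exact rad_le_self ‹_›

lemma pow_lt_pow_of_lt_rpow_div {x y : ℝ} (hx : 0 ≤ x) (hy : 0 ≤ y) {k m : ℕ} (hk : k ≠ 0)
    (h : x < y ^ ((m : ℝ) / k)) : x ^ k < y ^ m := by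
  calc x ^ k < (y ^ ((m : ℝ) / k)) ^ k := pow_lt_pow_left₀ h hx hk
    _ = y ^ m := by
      rw [← Real.rpow_natCast _ k, ← Real.rpow_mul hy, div_mul_cancel₀ _ (by exact_mod_cast hk),
        Real.rpow_natCast]

lemma mul_pow_nine_le_two_pow {n : ℕ} (hn : 12 ≤ n) :
    4096 * n ^ 9 ≤ 2 ^ (5 * n - 14) := by
  induction n, hn using Nat.le_induction with
  | base => norm_num
  | succ m hm ih =>
    have hstep : (m + 1) ^ 9 ≤ 32 * m ^ 9 := by
      have : 3 ^ 9 * (m + 1) ^ 9 ≤ 3 ^ 9 * (32 * m ^ 9) :=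
        calc 3 ^ 9 * (m + 1) ^ 9 = (3 * (m + 1)) ^ 9 := by ring
          _ ≤ (4 * m) ^ 9 := Nat.pow_le_pow_left (by omega) 9
          _ ≤ 3 ^ 9 * (32 * m ^ 9) := by ring_nf; omega
      exact Nat.le_of_mul_le_mul_left this (by norm_num)
    calc 4096 * (m + 1) ^ 9 ≤ 32 * (4096 * m ^ 9) := by omega
      _ ≤ 2 ^ 5 * 2 ^ (5 * m - 14) := by gcongr; norm_num
      _ = 2 ^ (5 * (m + 1) - 14) := by rw [← pow_add]; congr 1; omega

lemma mul_pred_eq_of_eq_repunit {M b q c : ℕ} (hb : 1 ≤ b) (hq : 1 ≤ q)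
    (hc : b ^ (q - 1) = c + 1) (h : (M + 1) * (b - 1) = b ^ q - 1) : M * (b - 1) = b * c := by
  have hbq : b ^ q = b * (c + 1) := by rw [← hc, ← pow_succ', Nat.sub_add_cancel hq]
  obtain ⟨b', rfl⟩ : ∃ b', b = b' + 1 := ⟨b - 1, by omega⟩
  rw [hbq, Nat.add_sub_cancel] at h
  rw [Nat.add_sub_cancel]
  have : (M + 1) * b' + 1 = (b' + 1) * (c + 1) := by
    have : 1 ≤ (b' + 1) * (c + 1) := Nat.one_le_iff_ne_zero.mpr (by positivity)
    omega
  linarith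

lemma succ_le_and_le_two_mul_of_mul_pred_eq {M b c : ℕ} (hb : 2 ≤ b) (hbc : b ^ 2 ≤ c + 1)
    (h : M * (b - 1) = b * c) : c + 1 ≤ M ∧ M ≤ 2 * c := by
  obtain ⟨b', rfl⟩ : ∃ b', b = b' + 1 := ⟨b - 1, by omega⟩
  rw [Nat.add_sub_cancel] at h
  constructor <;> nlinarith

lemma rad_le_of_mul_pred_eq {s n b q c : ℕ} (hs : s ≠ 0) (hn : n ≠ 0) (hb : 2 ≤ b) (hq : 2 ≤ q)
    (hc : b ^ (q - 1) = c + 1) (h : n * s ^ n * (b - 1) = b * c) (hc0 : c ≠ 0) :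
    rad (1 * c * (c + 1)) ≤ n * s * (b - 1) :=
  calc rad (1 * c * (c + 1)) = rad (c * b ^ (q - 1)) := by rw [one_mul, hc]
    _ = rad (n * s ^ n * (b - 1)) := by
      rw [rad_mul_pow hc0 (by omega) (by omega), h, mul_comm]
    _ ≤ n * s * (b - 1) := rad_mul_pow_mul_le hn hs (by omega)

lemma pow_five_lt_of_pow_six_lt {M c r b : ℕ} (hbc : b ^ 2 ≤ c + 1) (hcM : c + 1 ≤ M)
    (hMc : M ≤ 2 * (c + 1)) (h : (c + 1) ^ 6 < (r * b) ^ 7) : M ^ 5 < 4096 * r ^ 14 := by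
  have h6 : M ^ 6 < 64 * (r * b) ^ 7 :=
    calc M ^ 6 ≤ (2 * (c + 1)) ^ 6 := Nat.pow_le_pow_left hMc 6
      _ = 64 * (c + 1) ^ 6 := by ring
      _ < 64 * (r * b) ^ 7 := by omega
  have h12 : M ^ 5 * M ^ 7 < 4096 * r ^ 14 * M ^ 7 :=
    calc M ^ 5 * M ^ 7 = (M ^ 6) ^ 2 := by ring
      _ < (64 * (r * b) ^ 7) ^ 2 := Nat.pow_lt_pow_left h6 (by norm_num)
      _ = 4096 * r ^ 14 * (b ^ 2) ^ 7 := by ring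
      _ ≤ 4096 * r ^ 14 * M ^ 7 := by gcongr; omega
  exact Nat.lt_of_mul_lt_mul_right h12

lemma le_of_cullen_pow_five_lt {n s : ℕ} (hn : 3 ≤ n) (hs : 2 ≤ s)
    (h : (n * s ^ n) ^ 5 < 4096 * (n * s) ^ 14) : n ≤ 11 ∧ s < 4096 * 11 ^ 9 := by
  have hexp : s ^ (5 * n - 14) * (s ^ 14 * n ^ 5) < 4096 * n ^ 9 * (s ^ 14 * n ^ 5) :=
    calc s ^ (5 * n - 14) * (s ^ 14 * n ^ 5) = (n * s ^ n) ^ 5 := by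
          rw [← mul_assoc, ← pow_add, Nat.sub_add_cancel (by omega)]; ring
      _ < 4096 * (n * s) ^ 14 := h
      _ = 4096 * n ^ 9 * (s ^ 14 * n ^ 5) := by ring
  have hpow : s ^ (5 * n - 14) < 4096 * n ^ 9 := Nat.lt_of_mul_lt_mul_right hexp
  have hn11 : n ≤ 11 := by
    by_contra! hn12
    have := mul_pow_nine_le_two_pow hn12
    have := Nat.pow_le_pow_left hs (5 * n - 14)
    omega
  refine ⟨hn11, ?_⟩
  calc s ≤ s ^ (5 * n - 14) := Nat.le_self_pow (by omega) s
    _ < 4096 * n ^ 9 := hpow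
    _ ≤ 4096 * 11 ^ 9 := by gcongr

lemma le_cullen_of_eq_repunit {s n b q c : ℕ} (hs : 2 ≤ s) (hn : 1 ≤ n) (hb : 2 ≤ b)
    (hc : b ^ (q - 1) = c + 1) (hbc : b ^ 2 ≤ c + 1) (hcM : c + 1 ≤ n * s ^ n) :
    s ≤ n * s ^ n ∧ n ≤ n * s ^ n ∧ b ≤ n * s ^ n ∧ q ≤ n * s ^ n := by
  have hsM : s ≤ n * s ^ n :=
    (Nat.le_self_pow (by omega) s).trans (Nat.le_mul_of_pos_left _ hn)
  have hnM : n ≤ n * s ^ n := Nat.le_mul_of_pos_right _ (by positivity)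
  have hbM : b ≤ n * s ^ n := (Nat.le_self_pow (by norm_num) b).trans (hbc.trans hcM)
  have hqM : q - 1 < n * s ^ n :=
    calc q - 1 < 2 ^ (q - 1) := Nat.lt_two_pow_self
      _ ≤ b ^ (q - 1) := Nat.pow_le_pow_left hb _
      _ ≤ n * s ^ n := hc ▸ hcM
  exact ⟨hsM, hnM, hbM, by omega⟩

lemma cullen_le_of_lt_rpow {s n b q c : ℕ} (hs : 2 ≤ s) (hn : 3 ≤ n) (hb : 2 ≤ b) (hq : 2 ≤ q)
    (hc : b ^ (q - 1) = c + 1) (h : n * s ^ n * (b - 1) = b * c) (hbc : b ^ 2 ≤ c + 1)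
    (hcM : c + 1 ≤ n * s ^ n) (hMc : n * s ^ n ≤ 2 * c) (hc0 : c ≠ 0)
    (hlt : ((c + 1 : ℕ) : ℝ) < (rad (1 * c * (c + 1)) : ℝ) ^ ((7 : ℝ) / 6)) :
    n * s ^ n ≤ 11 * (4096 * 11 ^ 9) ^ 11 := by
  have hrad := rad_le_of_mul_pred_eq (by omega) (by omega) hb hq hc h hc0
  have h67 : (c + 1) ^ 6 < rad (1 * c * (c + 1)) ^ 7 := by
    exact_mod_cast pow_lt_pow_of_lt_rpow_div (Nat.cast_nonneg _) (Nat.cast_nonneg _)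
      (by norm_num : (6 : ℕ) ≠ 0) (m := 7) hlt
  have h6 : (c + 1) ^ 6 < (n * s * b) ^ 7 :=
    h67.trans_le (Nat.pow_le_pow_left (hrad.trans (Nat.mul_le_mul_left _ (Nat.sub_le b 1))) 7)
  obtain ⟨hn11, hs11⟩ := le_of_cullen_pow_five_lt hn hs
    (pow_five_lt_of_pow_six_lt hbc hcM (by omega) h6)
  calc n * s ^ n ≤ 11 * (4096 * 11 ^ 9) ^ n := by gcongr
    _ ≤ 11 * (4096 * 11 ^ 9) ^ 11 := by gcongr; norm_num

theorem stmt_11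
    (habc : {t : ℕ × ℕ × ℕ | 0 < t.1 ∧ 0 < t.2.1 ∧ Nat.Coprime t.1 t.2.1 ∧
        t.1 + t.2.1 = t.2.2 ∧
        ((t.2.2 : ℝ) ≥ (rad (t.1 * t.2.1 * t.2.2) : ℝ) ^ ((7 : ℝ) / 6))}.Finite) :
    {t : ℕ × ℕ × ℕ × ℕ | 2 ≤ t.1 ∧ 3 ≤ t.2.1 ∧ 2 ≤ t.2.2.1 ∧ 3 ≤ t.2.2.2 ∧
      (t.2.1 * t.1 ^ t.2.1 + 1) * (t.2.2.1 - 1) = t.2.2.1 ^ t.2.2.2 - 1}.Finite := by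
  let K := 11 * (4096 * 11 ^ 9) ^ 11
  refine ((habc.biUnion fun t _ => Set.finite_Iic (2 * t.2.2, 2 * t.2.2, 2 * t.2.2, 2 * t.2.2)).union
    (Set.finite_Iic (K, K, K, K))).subset ?_
  rintro ⟨s, n, b, q⟩ ⟨hs, hn, hb, hq, heq⟩
  dsimp only at hs hn hb hq heq
  obtain ⟨c, hc⟩ : ∃ c, b ^ (q - 1) = c + 1 := ⟨_, (Nat.succ_pred_eq_of_pos (by positivity)).symm⟩
  have hbc : b ^ 2 ≤ c + 1 := hc ▸ Nat.pow_le_pow_right (by omega) (by omega)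
  have hMbc := mul_pred_eq_of_eq_repunit (by omega) (by omega) hc heq
  obtain ⟨hcM, hMc⟩ := succ_le_and_le_two_mul_of_mul_pred_eq hb hbc hMbc
  obtain ⟨hsM, hnM, hbM, hqM⟩ := le_cullen_of_eq_repunit hs (by omega) hb hc hbc hcM
  have hc0 : 0 < c := by have := Nat.pow_le_pow_left hb 2; omega
  by_cases hexc : ((c + 1 : ℕ) : ℝ) ≥ (rad (1 * c * (c + 1)) : ℝ) ^ ((7 : ℝ) / 6)
  · refine Or.inl (Set.mem_biUnion (x := (1, c, c + 1)) ⟨one_pos, hc0, Nat.coprime_one_left c,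
      add_comm 1 c, hexc⟩ ?_)
    simp only [Set.mem_Iic, Prod.mk_le_mk]
    omega
  · have hMK : n * s ^ n ≤ K :=
      cullen_le_of_lt_rpow hs hn hb (by omega) hc hMbc hbc hcM hMc hc0.ne' (not_le.mp hexc)
    refine Or.inr ?_
    simp only [Set.mem_Iic, Prod.mk_le_mk]
    omega
end

section
/- For fixed s ≥ 2, if the abc conjecture with ε = 1/6 holds (only finitely many coprime triples a + b = c with c ≥ rad(abc)^{7/6}), then there are only finitely many triples (n, b, q) with n ≥ 3, b ≥ 2, q ≥ 3 and n·s^n + 1 = (b^q - 1)/(b - 1). -/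
open Filter UniqueFactorizationMonoid

lemma rad_eq_radical (m : ℕ) : rad m = radical m :=
  Nat.radical_eq_prod_primeFactors.symm

lemma rad_mul_pow_le {n s : ℕ} (hn : n ≠ 0) (hs : s ≠ 0) (k : ℕ) : rad (n * s ^ k) ≤ n * s := by
  rw [rad_eq_radical]
  calc radical (n * s ^ k) ≤ radical n * radical (s ^ k) :=
        Nat.le_of_dvd (by positivity [Nat.radical_pos n, Nat.radical_pos (s ^ k)]) radical_mul_dvd
    _ ≤ n * s := by
      gcongr
      · exact Nat.radical_le_self_iff.2 hn
      · exact Nat.le_of_dvd (Nat.pos_of_ne_zero hs) ((radical_pow_dvd).trans radical_dvd_self)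

lemma rad_sub_one_mul_mul_pow_le {b G k : ℕ} (hb : 2 ≤ b) (hG : G ≠ 0) (hk : k ≠ 0) :
    rad ((b - 1) * G * b ^ k) ≤ (b - 1) * rad (b * G) := by
  have hdvd : (b - 1) * G * b ^ k ∣ ((b - 1) * (b * G)) ^ k := by
    obtain ⟨j, rfl⟩ := Nat.exists_eq_add_of_le' (Nat.one_le_iff_ne_zero.2 hk)
    exact ⟨(b - 1) ^ j * G ^ j, by ring⟩
  have hne : (b - 1) * (b * G) ≠ 0 := by positivity [show b - 1 ≠ 0 by omega]
  rw [rad_eq_radical, rad_eq_radical]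
  calc radical ((b - 1) * G * b ^ k) ≤ radical ((b - 1) * (b * G)) := by
        refine Nat.le_of_dvd (Nat.radical_pos _) ?_
        simpa only [radical_pow _ hk] using radical_dvd_radical hdvd (pow_ne_zero k hne)
    _ ≤ radical (b - 1) * radical (b * G) :=
        Nat.le_of_dvd (by positivity [Nat.radical_pos (b - 1), Nat.radical_pos (b * G)])
          radical_mul_dvd
    _ ≤ (b - 1) * radical (b * G) := by gcongr; exact Nat.radical_le_self_iff.2 (by omega)

lemma exists_eq_mul_of_succ_mul_sub_one_eq {N b q : ℕ} (hb : 2 ≤ b) (hq : 1 ≤ q)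
    (h : (N + 1) * (b - 1) = b ^ q - 1) : ∃ G, N = b * G ∧ b ^ (q - 1) = (b - 1) * G + 1 := by
  set G := ∑ i ∈ Finset.range (q - 1), b ^ i
  have hgeom : b ^ (q - 1) = (b - 1) * G + 1 := by
    simpa only [G, Nat.sub_add_cancel (by omega : 1 ≤ b), mul_comm, eq_comm] using
      (geom_sum_mul_add (b - 1) (q - 1)).symm
  refine ⟨G, Nat.eq_of_mul_eq_mul_right (by omega : 0 < b - 1) ?_, hgeom⟩
  have hq' : b ^ q = b * b ^ (q - 1) := by rw [← pow_succ', Nat.sub_add_cancel hq]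
  zify [Nat.one_le_pow q b (by omega), (by omega : 1 ≤ b)] at h hgeom hq' ⊢
  linear_combination h + hq' + b * hgeom

lemma eventually_const_mul_pow_le_pow (C k : ℕ) {r : ℕ} (hr : 1 < r) :
    ∀ᶠ n in atTop, C * n ^ k ≤ r ^ n := by
  have hlim := tendsto_pow_const_div_const_pow_of_one_lt k (by exact_mod_cast hr : (1 : ℝ) < r)
  filter_upwards [hlim.eventually (gt_mem_nhds (by positivity : (0 : ℝ) < 1 / (C + 1)))]
    with n hn
  have hrn : (0 : ℝ) < (r : ℝ) ^ n := by positivity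
  rw [div_lt_div_iff₀ hrn (by positivity), one_mul] at hn
  exact_mod_cast (by nlinarith [pow_nonneg (Nat.cast_nonneg n : (0 : ℝ) ≤ n) k] :
    (C : ℝ) * n ^ k ≤ r ^ n)

lemma eventually_mul_pow_pow_le :
    ∀ᶠ n in atTop, ∀ s, 2 ≤ s → 32 * (n * s) ^ 14 ≤ (n * s ^ n) ^ 5 := by
  filter_upwards [eventually_const_mul_pow_le_pow (2 ^ 19) 9 (by norm_num : 1 < 32),
    eventually_ge_atTop 3] with n hpow hn s hs
  obtain ⟨m, hm⟩ := Nat.exists_eq_add_of_le (by omega : 14 ≤ 5 * n)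
  have h2m : 32 * n ^ 9 ≤ 2 ^ m := by
    rw [show (32 : ℕ) ^ n = 2 ^ (5 * n) by rw [pow_mul]; norm_num, hm, pow_add] at hpow
    omega
  calc 32 * (n * s) ^ 14 = n ^ 5 * (32 * n ^ 9) * s ^ 14 := by ring
    _ ≤ n ^ 5 * s ^ m * s ^ 14 := by gcongr; exact h2m.trans (Nat.pow_le_pow_left hs m)
    _ = (n * s ^ n) ^ 5 := by rw [mul_pow, ← pow_mul, mul_comm n 5, hm]; ring

lemma pow_seven_le_pow_six {R b r N c : ℕ} (hR : R ≤ b * r) (hb : b ^ 2 ≤ c)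
    (hr : 32 * r ^ 14 ≤ N ^ 5) (hN : N ≤ 2 * c) : R ^ 7 ≤ c ^ 6 := by
  have hr' : r ^ 14 ≤ c ^ 5 := by
    have := hr.trans (Nat.pow_le_pow_left hN 5)
    rw [mul_pow] at this
    omega
  refine (Nat.pow_le_pow_iff_left (by norm_num : 2 ≠ 0)).1 ?_
  calc (R ^ 7) ^ 2 ≤ ((b * r) ^ 7) ^ 2 := by gcongr
    _ = (b ^ 2) ^ 7 * r ^ 14 := by ring
    _ ≤ c ^ 7 * c ^ 5 := by gcongr
    _ = (c ^ 6) ^ 2 := by ring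

lemma rpow_seven_div_six_le {r c : ℕ} (h : r ^ 7 ≤ c ^ 6) : (r : ℝ) ^ ((7 : ℝ) / 6) ≤ c := by
  rw [← pow_le_pow_iff_left₀ (by positivity) (by positivity) (by norm_num : 6 ≠ 0),
    ← Real.rpow_natCast, ← Real.rpow_mul (by positivity)]
  norm_num
  exact_mod_cast h

def abcExceptions : Set (ℕ × ℕ × ℕ) :=
  {t | 0 < t.1 ∧ 0 < t.2.1 ∧ Nat.Coprime t.1 t.2.1 ∧ t.1 + t.2.1 = t.2.2 ∧
    ((t.2.2 : ℝ) ≥ (rad (t.1 * t.2.1 * t.2.2) : ℝ) ^ ((7 : ℝ) / 6))}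

lemma mem_abcExceptions {c : ℕ} (hc : 2 ≤ c) (h : rad ((c - 1) * c) ^ 7 ≤ c ^ 6) :
    (1, c - 1, c) ∈ abcExceptions :=
  ⟨one_pos, by dsimp only; omega, Nat.coprime_one_left _, by dsimp only; omega,
    by simpa only [one_mul] using rpow_seven_div_six_le h⟩

lemma pow_pred_le_of_solution {s n₀ C n b q : ℕ} (hs : 0 < s)
    (hC : ∀ t ∈ abcExceptions, t.2.2 ≤ C)
    (hn₀ : ∀ n, n₀ ≤ n → 32 * (n * s) ^ 14 ≤ (n * s ^ n) ^ 5)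
    (hn : 0 < n) (hb : 2 ≤ b) (hq : 3 ≤ q) (G : ℕ) (hN : n * s ^ n = b * G)
    (hG : b ^ (q - 1) = (b - 1) * G + 1) (hNc : n * s ^ n ≤ 2 * b ^ (q - 1)) :
    b ^ (q - 1) ≤ max C (n₀ * s ^ n₀ + 1) := by
  rcases lt_or_ge n n₀ with hsmall | hlarge
  · have : n * s ^ n ≤ n₀ * s ^ n₀ :=
      Nat.mul_le_mul hsmall.le (Nat.pow_le_pow_right (by omega) hsmall.le)
    have : (b - 1) * G ≤ b * G := Nat.mul_le_mul_right G (by omega)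
    omega
  · refine le_max_of_le_left (hC _ (mem_abcExceptions (c := b ^ (q - 1)) ?_ ?_))
    · exact (Nat.le_self_pow (by omega) b).trans' hb
    have hG0 : G ≠ 0 := by
      rintro rfl
      exact (by positivity : 0 < n * s ^ n).ne' (hN.trans (mul_zero b))
    have hrad : rad ((b ^ (q - 1) - 1) * b ^ (q - 1)) ≤ b * (n * s) :=
      calc rad ((b ^ (q - 1) - 1) * b ^ (q - 1)) = rad ((b - 1) * G * b ^ (q - 1)) := by
            rw [hG, Nat.add_sub_cancel, ← hG]
        _ ≤ (b - 1) * rad (n * s ^ n) := hN ▸ rad_sub_one_mul_mul_pow_le hb hG0 (by omega)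
        _ ≤ b * (n * s) := Nat.mul_le_mul (by omega) (rad_mul_pow_le (by omega) (by omega) n)
    exact pow_seven_le_pow_six hrad (Nat.pow_le_pow_right (by omega) (by omega)) (hn₀ n hlarge) hNc

theorem stmt_16 (s : ℕ) (hs : 2 ≤ s)
    (habc : {t : ℕ × ℕ × ℕ | 0 < t.1 ∧ 0 < t.2.1 ∧ Nat.Coprime t.1 t.2.1 ∧
        t.1 + t.2.1 = t.2.2 ∧
        ((t.2.2 : ℝ) ≥ (rad (t.1 * t.2.1 * t.2.2) : ℝ) ^ ((7 : ℝ) / 6))}.Finite) :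
    {t : ℕ × ℕ × ℕ | 3 ≤ t.1 ∧ 2 ≤ t.2.1 ∧ 3 ≤ t.2.2 ∧
      (t.1 * s ^ t.1 + 1) * (t.2.1 - 1) = t.2.1 ^ t.2.2 - 1}.Finite := by
  obtain ⟨C, hC⟩ := (habc.image fun t => t.2.2).bddAbove
  obtain ⟨n₀, hn₀⟩ := eventually_atTop.1 eventually_mul_pow_pow_le
  set M := max C (n₀ * s ^ n₀ + 1)
  refine ((Set.finite_Iic (2 * M)).prod ((Set.finite_Iic M).prod (Set.finite_Iic M))).subset ?_
  rintro ⟨n, b, q⟩ ⟨hn, hb, hq, h⟩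
  dsimp only at hn hb hq h
  obtain ⟨G, hN, hG⟩ := exists_eq_mul_of_succ_mul_sub_one_eq hb (by omega) h
  have hNc : n * s ^ n ≤ 2 * b ^ (q - 1) := by
    have : b * G ≤ 2 * ((b - 1) * G) := by rw [← mul_assoc]; exact Nat.mul_le_mul_right G (by omega)
    omega
  have hcM : b ^ (q - 1) ≤ M := pow_pred_le_of_solution (by omega) (fun t ht => hC ⟨t, ht, rfl⟩)
    (fun n h => hn₀ n h s hs) (by omega) hb hq G hN hG hNc
  have hbc : b ≤ b ^ (q - 1) := Nat.le_self_pow (by omega) b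
  have hqc : q ≤ b ^ (q - 1) :=
    calc q ≤ 2 ^ (q - 1) := by have := @Nat.lt_two_pow_self (q - 1); omega
      _ ≤ b ^ (q - 1) := Nat.pow_le_pow_left hb _
  have hnN : n ≤ n * s ^ n := Nat.le_mul_of_pos_right n (by positivity)
  simp only [Set.mem_prod, Set.mem_Iic]
  omega
end
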